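/- Let n ≥ 2, ρ = exp(2πi/n), s ∈ ℂ with s ≠ 0, and let Γ₀,…,Γ_{n−1} ∈ ℝ. Consider the n vortices at positions z_k = s·ρᵏ (0 ≤ k ≤ n−1) with vorticities Γ_k. If this configuration is a relative equilibrium with angular velocity ω ∈ ℝ, then ω = ((n−1)/(2n·|s|²))·(Γ₀ + Γ₁ + ⋯ + Γ_{n−1}). -/

import Mathlib

open Finset

/-- **Angular velocity of a polygonal relative equilibrium.**
If the `n` vortices at positions `z k = s * ρ ^ k` with vorticities `Γ k` form a
relative equilibrium with angular velocity `ω`, then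
`ω = (n-1)/(2 n |s|²) * (Γ₀ + ⋯ + Γ_{n-1})`. -/
theorem angular_velocity_of_regular_polygon
    (n : ℕ) (hn : 2 ≤ n)
    (ρ : ℂ) (hρ : ρ = Complex.exp (2 * Real.pi * Complex.I / n))
    (s : ℂ) (hs : s ≠ 0)
    (Γ : Fin n → ℝ) (ω : ℝ)
    (z : Fin n → ℂ) (hz : ∀ k, z k = s * ρ ^ (k : ℕ))
    (v : Fin n → ℂ)
    (hv : ∀ k, v k = Complex.I *
      ∑ l ∈ univ \ {k}, (Γ l : ℂ) / (starRingEnd ℂ (z k) - starRingEnd ℂ (z l)))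
    (hre : ∀ k l, v l - v k = Complex.I * (ω : ℂ) * (z l - z k)) :
    ω = (n - 1) / (2 * n * ‖s‖ ^ 2) * ∑ k, Γ k := by
  have hn0 : n ≠ 0 := by omega
  haveI : NeZero n := ⟨hn0⟩
  have hprim : IsPrimitiveRoot ρ n := hρ ▸ Complex.isPrimitiveRoot_exp n hn0
  have hρ0 : ρ ≠ 0 := hprim.ne_zero hn0
  have hρn : ρ ^ n = 1 := hprim.pow_eq_one
  have hmod : ∀ a : ℕ, ρ ^ a = ρ ^ (a % n) := by
    intro a
    conv_lhs => rw [← Nat.div_add_mod a n]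
    rw [pow_add, pow_mul, hρn, one_pow, one_mul]
  have hadd : ∀ a b : Fin n, ρ ^ ((a + b : Fin n) : ℕ) = ρ ^ (a : ℕ) * ρ ^ (b : ℕ) := by
    intro a b
    rw [← pow_add, hmod ((a:ℕ) + (b:ℕ))]
    congr 1
  have hinv : ∀ m : Fin n, ρ ^ ((-m : Fin n) : ℕ) = (ρ ^ (m : ℕ))⁻¹ := by
    intro m
    have h1 : ρ ^ ((m + -m : Fin n) : ℕ) = 1 := by
      rw [add_neg_cancel]; simp
    rw [hadd] at h1
    exact eq_inv_of_mul_eq_one_right (by linear_combination h1)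
  have hnormρ : ‖ρ‖ = 1 := hprim.norm'_eq_one hn0
  have hconj : ∀ m : Fin n, (starRingEnd ℂ) (ρ ^ (m : ℕ)) = ρ ^ ((-m : Fin n) : ℕ) := by
    intro m
    rw [hinv m, Complex.inv_eq_conj (by rw [norm_pow, hnormρ, one_pow])]
  have hz0 : ∀ k : Fin n, z k ≠ 0 := by
    intro k; rw [hz]; exact mul_ne_zero hs (pow_ne_zero _ hρ0)
  have hzc0 : ∀ k : Fin n, (starRingEnd ℂ) (z k) ≠ 0 := by
    intro k; simpa using hz0 k
  have hb : ∀ k l : Fin n, (starRingEnd ℂ) (z l)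
      = (starRingEnd ℂ) (z k) * ρ ^ ((k - l : Fin n) : ℕ) := by
    intro k l
    have h1 : ρ ^ (k : ℕ) * ρ ^ (((l - k) : Fin n) : ℕ) = ρ ^ (l : ℕ) := by
      have h3 : (k + (l - k) : Fin n) = l := by rw [add_comm, sub_add_cancel]
      rw [← hadd, h3]
    have h2 := congrArg (starRingEnd ℂ) h1
    rw [map_mul, hconj (l - k), neg_sub] at h2
    rw [hz k, hz l, map_mul, map_mul, ← h2]
    ring
  have key1 : ∀ k l : Fin n, (starRingEnd ℂ) (z k) *
      ((Γ l : ℂ) / ((starRingEnd ℂ) (z k) - (starRingEnd ℂ) (z l)))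
      = (Γ l : ℂ) / (1 - ρ ^ ((k - l : Fin n) : ℕ)) := by
    intro k l
    rw [hb k l]
    rw [show (starRingEnd ℂ) (z k) - (starRingEnd ℂ) (z k) * ρ ^ ((k - l : Fin n) : ℕ)
      = (starRingEnd ℂ) (z k) * (1 - ρ ^ ((k - l : Fin n) : ℕ)) by ring]
    rw [mul_div_assoc', mul_div_mul_left _ _ (hzc0 k)]
  -- the special sum T
  set T : ℂ := ∑ m ∈ (univ \ {0} : Finset (Fin n)), 1 / (1 - ρ ^ (m : ℕ)) with hT
  have hTval : T = ((n : ℂ) - 1) / 2 := by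
    have hTdup : T = ∑ m ∈ (univ \ {0} : Finset (Fin n)), 1 / (1 - ρ ^ ((-m : Fin n) : ℕ)) := by
      rw [hT]
      apply Finset.sum_nbij' (fun m => -m) (fun m => -m)
      · intro a ha; simp only [mem_sdiff, mem_univ, mem_singleton, true_and] at ha ⊢
        exact neg_ne_zero.mpr ha
      · intro a ha; simp only [mem_sdiff, mem_univ, mem_singleton, true_and] at ha ⊢
        exact neg_ne_zero.mpr ha
      · intro a _; simp
      · intro a _; simp
      · intro a _; simp
    have h2T : T + T = ∑ m ∈ (univ \ {0} : Finset (Fin n)),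
        (1 / (1 - ρ ^ (m : ℕ)) + 1 / (1 - ρ ^ ((-m : Fin n) : ℕ))) := by
      rw [Finset.sum_add_distrib, ← hT, ← hTdup]
    have hptw : ∀ m ∈ (univ \ {0} : Finset (Fin n)),
        1 / (1 - ρ ^ (m : ℕ)) + 1 / (1 - ρ ^ ((-m : Fin n) : ℕ)) = 1 := by
      intro m hm
      simp only [mem_sdiff, mem_univ, mem_singleton, true_and] at hm
      have hmpos : 0 < (m : ℕ) := Nat.pos_of_ne_zero (fun h => hm (Fin.ext (by simp [h])))
      have hw1 : ρ ^ (m : ℕ) ≠ 1 := hprim.pow_ne_one_of_pos_of_lt hmpos.ne' m.isLt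
      have hw0 : ρ ^ (m : ℕ) ≠ 0 := pow_ne_zero _ hρ0
      rw [hinv m]
      have hd1 : 1 - ρ ^ (m : ℕ) ≠ 0 := sub_ne_zero.mpr (Ne.symm hw1)
      have hinv1 : (ρ ^ (m : ℕ))⁻¹ ≠ 1 := by simpa [inv_eq_one] using hw1
      have hd2 : 1 - (ρ ^ (m : ℕ))⁻¹ ≠ 0 := sub_ne_zero.mpr (Ne.symm hinv1)
      rw [div_add_div _ _ hd1 hd2, div_eq_one_iff_eq (mul_ne_zero hd1 hd2)]
      field_simp
      ring
    have hcard : (univ \ {0} : Finset (Fin n)).card = n - 1 := by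
      rw [Finset.card_sdiff_of_subset (by simp)]
      simp
    rw [Finset.sum_congr rfl hptw, Finset.sum_const, hcard, nsmul_eq_mul, mul_one] at h2T
    have hc : (((n - 1 : ℕ) : ℂ)) = (n : ℂ) - 1 := by
      push_cast [Nat.cast_sub (by omega : 1 ≤ n)]; ring
    rw [hc] at h2T
    linear_combination h2T / 2
  -- evaluation 1 of S
  set S : ℂ := ∑ k, (starRingEnd ℂ) (z k) * v k with hS
  have hS1 : S = Complex.I * (T * ∑ l, (Γ l : ℂ)) := by
    have step1 : S = Complex.I * ∑ k : Fin n, ∑ l ∈ univ \ {k},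
        (Γ l : ℂ) / (1 - ρ ^ ((k - l : Fin n) : ℕ)) := by
      rw [hS, Finset.mul_sum]
      refine Finset.sum_congr rfl fun k _ => ?_
      rw [hv k, mul_left_comm]
      congr 1
      rw [Finset.mul_sum]
      exact Finset.sum_congr rfl fun l _ => key1 k l
    have step2 : (∑ k : Fin n, ∑ l ∈ univ \ {k},
        (Γ l : ℂ) / (1 - ρ ^ ((k - l : Fin n) : ℕ)))
        = ∑ l : Fin n, ∑ k ∈ univ \ {l}, (Γ l : ℂ) / (1 - ρ ^ ((k - l : Fin n) : ℕ)) := by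
      apply Finset.sum_comm'
      intro k l
      simp only [mem_univ, true_and, and_true, mem_sdiff, mem_singleton]
      exact ne_comm
    have step3 : ∀ l : Fin n, (∑ k ∈ univ \ {l},
        (Γ l : ℂ) / (1 - ρ ^ ((k - l : Fin n) : ℕ))) = (Γ l : ℂ) * T := by
      intro l
      rw [hT, Finset.mul_sum]
      apply Finset.sum_nbij' (fun k => k - l) (fun m => m + l)
      · intro a ha; simp only [mem_sdiff, mem_univ, mem_singleton, true_and] at ha ⊢
        exact sub_ne_zero.mpr ha
      · intro a ha; simp only [mem_sdiff, mem_univ, mem_singleton, true_and] at ha ⊢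
        intro h; exact ha (by simpa using congrArg (fun x => x - l) h)
      · intro a _; simp
      · intro a _; simp
      · intro a _; rw [mul_one_div]
    rw [step1, step2, Finset.sum_congr rfl (fun l _ => step3 l), ← Finset.sum_mul]
    ring
  -- evaluation 2 of S
  have hvk : ∀ k, v k = Complex.I * ω * z k + (v 0 - Complex.I * ω * z 0) := by
    intro k; linear_combination hre 0 k
  have hnormSqρ : Complex.normSq ρ = 1 := by
    have := hnormρ
    rw [← Complex.sq_norm, this, one_pow]
  have hzz : ∀ k : Fin n, (starRingEnd ℂ) (z k) * z k = ((‖s‖ ^ 2 : ℝ) : ℂ) := by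
    intro k
    rw [mul_comm, Complex.mul_conj, hz, Complex.normSq_mul, map_pow, hnormSqρ,
      one_pow, mul_one, Complex.sq_norm]
  have hρ1 : ρ ≠ 1 := hprim.ne_one (by omega)
  have hsumρ : (∑ k : Fin n, ρ ^ (k : ℕ)) = 0 := by
    rw [Fin.sum_univ_eq_sum_range (fun i => ρ ^ i) n, geom_sum_eq hρ1, hρn, sub_self, zero_div]
  have hsumz : (∑ k : Fin n, (starRingEnd ℂ) (z k)) = 0 := by
    rw [← map_sum]
    have : (∑ k : Fin n, z k) = s * ∑ k : Fin n, ρ ^ (k : ℕ) := by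
      rw [Finset.mul_sum]; exact Finset.sum_congr rfl fun k _ => hz k
    rw [this, hsumρ, mul_zero, map_zero]
  have hS2 : S = Complex.I * ω * ((n : ℂ) * ((‖s‖ ^ 2 : ℝ) : ℂ)) := by
    rw [hS]
    have : ∀ k : Fin n, (starRingEnd ℂ) (z k) * v k
        = Complex.I * ω * ((‖s‖ ^ 2 : ℝ) : ℂ)
          + (v 0 - Complex.I * ω * z 0) * (starRingEnd ℂ) (z k) := by
      intro k
      rw [hvk k, mul_add, mul_comm ((starRingEnd ℂ) (z k)) (Complex.I * ↑ω * z k)]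
      rw [mul_assoc (Complex.I * ↑ω) (z k), mul_comm (z k), hzz k]
      ring
    rw [Finset.sum_congr rfl fun k _ => this k, Finset.sum_add_distrib,
      Finset.sum_const, ← Finset.mul_sum, hsumz, mul_zero, add_zero, card_univ,
      Fintype.card_fin, nsmul_eq_mul]
    ring
  -- combine
  have hAne : ((‖s‖ ^ 2 : ℝ) : ℂ) ≠ 0 := by
    simp only [ne_eq, Complex.ofReal_eq_zero, pow_eq_zero_iff, OfNat.ofNat_ne_zero,
      not_false_eq_true, and_true]
    exact fun h => hs (norm_eq_zero.mp (by simpa using h))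
  have hnne : (n : ℂ) ≠ 0 := Nat.cast_ne_zero.mpr hn0
  have heq : Complex.I * ω * ((n : ℂ) * ((‖s‖ ^ 2 : ℝ) : ℂ))
      = Complex.I * (((n : ℂ) - 1) / 2 * ∑ l, (Γ l : ℂ)) := by
    rw [← hS2, hS1, hTval]
  have heq2 : (ω : ℂ) * ((n : ℂ) * ((‖s‖ ^ 2 : ℝ) : ℂ))
      = ((n : ℂ) - 1) / 2 * ∑ l, (Γ l : ℂ) := by
    apply mul_left_cancel₀ Complex.I_ne_zero
    linear_combination heq
  have hfinal : (ω : ℂ) = ((n : ℂ) - 1) / (2 * (n : ℂ) * ((‖s‖ : ℝ) : ℂ) ^ 2)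
      * ∑ l, (Γ l : ℂ) := by
    have h2 : ((‖s‖ : ℝ) : ℂ) ^ 2 ≠ 0 := by
      intro h; exact hAne (by push_cast; exact h)
    rw [div_mul_eq_mul_div, eq_div_iff (mul_ne_zero (mul_ne_zero two_ne_zero hnne) h2)]
    push_cast at heq2
    linear_combination 2 * heq2
  exact_mod_cast hfinal
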